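/- arXiv:1010.4783 — 4 statements merged into one kernel-verified Lean document; each statement's English description precedes it below -/
import Mathlib

section
/- For all positive real numbers K and A with K/A > e, we have ∫₀^A √(ln(K/x)) dx ≤ 2A√(ln(K/A)). -/
/-!
Write `L = log (K / A) ≥ 1`, so that `log (K / x) = L + log (A / x)` with `log (A / x) ≥ 0` on `(0, A]`.
Concavity of `√` bounds `√(L + t)` by its tangent line `√L + t / (2√L)` at `L`, and
`∫₀^A log (A / x) dx = A`, so the integral is at most `A (√L + 1 / (2√L)) ≤ 2A√L` because `L ≥ 1/2`.
-/

open MeasureTheory Real Set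

theorem Real.sqrt_add_le_sqrt_add_div {a t : ℝ} (ha : 0 < a) (ht : -a ≤ t) :
    √(a + t) ≤ √a + t / (2 * √a) := by
  have hsa : 0 < √a := sqrt_pos.2 ha
  calc √(a + t) = √a * √(1 + t / a) := by
        rw [← sqrt_mul ha.le]; congr 1; field_simp
    _ ≤ √a * (1 + t / a / 2) := by
        gcongr; exact sqrt_one_add_le (by rw [le_div_iff₀ ha]; linarith)
    _ = √a + t / (2 * √a) := by
        nth_rw 2 [← sq_sqrt ha.le]; field_simp

theorem integrableOn_log_div_Ioc {A : ℝ} (hA : 0 < A) :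
    IntegrableOn (fun x ↦ log (A / x)) (Ioc 0 A) := by
  have h : IntegrableOn (fun x ↦ log A - log x) (Ioc 0 A) :=
    (intervalIntegrable_iff_integrableOn_Ioc_of_le hA.le).1
      (intervalIntegrable_const.sub intervalIntegral.intervalIntegrable_log')
  exact h.congr_fun (fun x hx ↦ (log_div hA.ne' hx.1.ne').symm) measurableSet_Ioc

theorem setIntegral_log_div_Ioc {A : ℝ} (hA : 0 < A) :
    ∫ x in Ioc 0 A, log (A / x) = A := by
  rw [setIntegral_congr_fun measurableSet_Ioc (fun x hx ↦ log_div hA.ne' hx.1.ne'),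
    ← intervalIntegral.integral_of_le hA.le,
    intervalIntegral.integral_sub intervalIntegrable_const intervalIntegral.intervalIntegrable_log', integral_log]
  simp

theorem setIntegral_sqrt_add_log_div_le {L A : ℝ} (hL : 0 < L) (hA : 0 < A) :
    ∫ x in Ioc 0 A, √(L + log (A / x)) ≤ A * (√L + 1 / (2 * √L)) := by
  have hint := integrableOn_log_div_Ioc hA
  have hconst : IntegrableOn (fun _ ↦ √L) (Ioc 0 A) := integrableOn_const measure_Ioc_lt_top.ne
  calc ∫ x in Ioc 0 A, √(L + log (A / x))
      ≤ ∫ x in Ioc 0 A, (√L + log (A / x) / (2 * √L)) := by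
        refine integral_mono_of_nonneg (.of_forall fun _ ↦ sqrt_nonneg _)
          (hconst.add (hint.div_const _)) ?_
        refine (ae_restrict_iff' measurableSet_Ioc).2 (.of_forall fun x hx ↦ ?_)
        have hlog : 0 ≤ log (A / x) := log_nonneg ((one_le_div hx.1).2 hx.2)
        exact sqrt_add_le_sqrt_add_div hL (by linarith)
    _ = A * (√L + 1 / (2 * √L)) := by
        rw [integral_add hconst (hint.div_const _),
          integral_div, setIntegral_const, setIntegral_log_div_Ioc hA]
        simp [hA.le]
        ring

theorem integral_sqrt_log_le_general (K A : ℝ) (hA : 0 < A)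
    (h : Real.exp 1 < K / A) :
    ∫ x in Set.Ioc (0:ℝ) A, Real.sqrt (Real.log (K / x)) ≤
      2 * A * Real.sqrt (Real.log (K / A)) := by
  set L := log (K / A)
  have hKA : 0 < K / A := (exp_pos 1).trans h
  have hL : 1 ≤ L := (le_log_iff_exp_le hKA).2 h.le
  have hsqrtL : 1 ≤ √L := one_le_sqrt.2 hL
  have hsplit : ∀ x ∈ Ioc 0 A, log (K / x) = L + log (A / x) := fun x hx ↦ by
    rw [← log_mul hKA.ne' (div_pos hA hx.1).ne', div_mul_div_cancel₀ hA.ne']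
  calc ∫ x in Ioc 0 A, √(log (K / x))
      = ∫ x in Ioc 0 A, √(L + log (A / x)) :=
        setIntegral_congr_fun measurableSet_Ioc fun x hx ↦ by rw [hsplit x hx]
    _ ≤ A * (√L + 1 / (2 * √L)) := setIntegral_sqrt_add_log_div_le (by linarith) hA
    _ ≤ 2 * A * √L := by
        have hinv : 1 / (2 * √L) ≤ √L := by
          rw [div_le_iff₀ (by linarith)]; nlinarith
        nlinarith [mul_le_mul_of_nonneg_left hinv hA.le]

theorem integral_sqrt_log_le (K A : ℝ) (hK : 0 < K) (hA : 0 < A)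
    (h : Real.exp 1 < K / A) :
    ∫ x in Set.Ioc (0:ℝ) A, Real.sqrt (Real.log (K / x)) ≤
      2 * A * Real.sqrt (Real.log (K / A)) :=
  integral_sqrt_log_le_general K A hA h
end

section
/- Let V be a finite subset of G containing i, and let Q, R be probability measures on 𝒳(V). Then for every configuration x with R(x(V\{i})) > 0 and Q(x(V\{i})) > 0, |Q_{i|V}(x) - R_{i|V}(x)| ≤ 3 · sup_{y : R(y(V\{i})) ≠ 0} |Q(y(V)) - R(y(V))| / R(y(V\{i})). -/
/-!
Write `a, a'` for the `Q`-probabilities of `x` and of `x` flipped at `i`, and `b, b'` for the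
`R`-probabilities, so that the two marginals are `p = a + a'` and `q = b + b'`. Then
`a / p - b / q = ((a - b) + (a / p) (q - p)) / q` with `0 ≤ a / p ≤ 1` and
`|p - q| ≤ |a - b| + |a' - b'|`, so the difference is at most `(2 |a - b| + |a' - b'|) / q`.
Since `x` and its flip have the same marginal `q`, both `|a - b| / q` and `|a' - b'| / q` are
bounded by the supremum, which is a maximum over finitely many configurations.
-/

open MeasureTheory

/-- Probability of the full cylinder `Q(x(V))`. -/
noncomputable def cylFull {ι : Type*} (Q : Measure (ι → Bool)) (x : ι → Bool) : ℝ :=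
  (Q {x}).toReal

/-- Marginal probability `Q(x(V \ {i}))`. -/
noncomputable def cylMarg {ι : Type*} (Q : Measure (ι → Bool)) (i : ι) (x : ι → Bool) : ℝ :=
  (Q {y | ∀ j, j ≠ i → y j = x j}).toReal

/-- Conditional probability `Q_{i|V}(x) = Q(x(V)) / Q(x(V \ {i}))`. -/
noncomputable def condP {ι : Type*} (Q : Measure (ι → Bool)) (i : ι) (x : ι → Bool) : ℝ :=
  cylFull Q x / cylMarg Q i x

theorem setOf_forall_ne_eq_eq_pair {ι : Type*} [DecidableEq ι] (i : ι) (x : ι → Bool) :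
    {y : ι → Bool | ∀ j, j ≠ i → y j = x j} = {x, Function.update x i (!x i)} := by
  ext y
  have hself : y = x ↔ y = Function.update x i (x i) := by rw [Function.update_eq_self]
  rw [Set.mem_insert_iff, Set.mem_singleton_iff, hself, Function.eq_update_iff,
    Function.eq_update_iff, ← or_and_right]
  cases x i <;> cases y i <;> simp [Set.mem_ofPred_eq]

theorem cylMarg_eq_cylFull_add {ι : Type*} [DecidableEq ι] [Countable ι] (Q : Measure (ι → Bool))
    [IsFiniteMeasure Q] (i : ι) (x : ι → Bool) :
    cylMarg Q i x = cylFull Q x + cylFull Q (Function.update x i (!x i)) := by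
  have hne : x ≠ Function.update x i (!x i) := by simp
  simp only [cylMarg, cylFull, setOf_forall_ne_eq_eq_pair, Set.insert_eq, ← measureReal_def]
  exact measureReal_union (Set.disjoint_singleton.mpr hne) (measurableSet_singleton _)

theorem cylMarg_update_self {ι : Type*} [DecidableEq ι] (R : Measure (ι → Bool)) (i : ι)
    (x : ι → Bool) (b : Bool) : cylMarg R i (Function.update x i b) = cylMarg R i x := by
  unfold cylMarg
  congr 2 with y
  exact forall₂_congr fun j hj => by rw [Function.update_of_ne hj]

theorem abs_div_sub_div_le {a b p q : ℝ} (ha : 0 ≤ a) (hap : a ≤ p) (hq : 0 < q) :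
    |a / p - b / q| ≤ (|a - b| + |p - q|) / q := by
  rcases (ha.trans hap).eq_or_lt with hp | hp
  · -- `p = 0` forces `a = 0`, and `a / 0 = 0`
    obtain rfl : a = 0 := le_antisymm (hp ▸ hap) ha
    rw [← hp, div_zero, zero_sub, abs_neg, zero_sub, abs_neg, abs_div, abs_of_pos hq]
    gcongr
    exact le_add_of_nonneg_right (abs_nonneg _)
  have hratio : |a / p| ≤ 1 := by
    rw [abs_of_nonneg (div_nonneg ha hp.le)]
    exact div_le_one_of_le₀ hap hp.le
  have hsplit : a / p - b / q = ((a - b) + a / p * (q - p)) / q := by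
    field_simp
    ring
  rw [hsplit, abs_div, abs_of_pos hq, abs_sub_comm p q]
  gcongr
  calc |a - b + a / p * (q - p)| ≤ |a - b| + |a / p| * |q - p| := by
        rw [← abs_mul]; exact abs_add_le _ _
    _ ≤ |a - b| + |q - p| := by
        gcongr; exact mul_le_of_le_one_left (abs_nonneg _) hratio

theorem condProb_difference_bound_general {ι : Type*} [Fintype ι]
    (Q R : Measure (ι → Bool)) [IsProbabilityMeasure Q] [IsProbabilityMeasure R]
    (i : ι) (x : ι → Bool)
    (hR : 0 < cylMarg R i x) :
    |condP Q i x - condP R i x| ≤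
      3 * sSup {v : ℝ | ∃ y : ι → Bool, cylMarg R i y ≠ 0 ∧
        v = |cylFull Q y - cylFull R y| / cylMarg R i y} := by
  classical
  set M := sSup {v : ℝ | ∃ y : ι → Bool, cylMarg R i y ≠ 0 ∧
    v = |cylFull Q y - cylFull R y| / cylMarg R i y}
  have hbdd : BddAbove {v : ℝ | ∃ y : ι → Bool, cylMarg R i y ≠ 0 ∧
      v = |cylFull Q y - cylFull R y| / cylMarg R i y} := by
    refine ((Set.finite_range fun y => |cylFull Q y - cylFull R y| / cylMarg R i y).subset
      ?_).bddAbove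
    rintro v ⟨y, -, rfl⟩
    exact ⟨y, rfl⟩
  have hM : ∀ y, cylMarg R i y = cylMarg R i x →
      |cylFull Q y - cylFull R y| ≤ M * cylMarg R i x := fun y hy => by
    rw [← div_le_iff₀ hR, ← hy]
    exact le_csSup hbdd ⟨y, hy ▸ hR.ne', rfl⟩
  set x' := Function.update x i (!x i)
  have hx := hM x rfl
  have hx' := hM x' (cylMarg_update_self R i x _)
  have hmarg : |cylMarg Q i x - cylMarg R i x| ≤
      |cylFull Q x - cylFull R x| + |cylFull Q x' - cylFull R x'| := by
    rw [cylMarg_eq_cylFull_add Q, cylMarg_eq_cylFull_add R, add_sub_add_comm]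
    exact abs_add_le _ _
  calc |condP Q i x - condP R i x|
      ≤ (|cylFull Q x - cylFull R x| + |cylMarg Q i x - cylMarg R i x|) / cylMarg R i x :=
        abs_div_sub_div_le ENNReal.toReal_nonneg
          (by rw [cylMarg_eq_cylFull_add Q]; exact le_add_of_nonneg_right ENNReal.toReal_nonneg) hR
    _ ≤ 3 * M := by
        rw [div_le_iff₀ hR]
        linarith

theorem condProb_difference_bound {ι : Type*} [Fintype ι]
    (Q R : Measure (ι → Bool)) [IsProbabilityMeasure Q] [IsProbabilityMeasure R]
    (i : ι) (x : ι → Bool)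
    (hR : 0 < cylMarg R i x) (hQ : 0 < cylMarg Q i x) :
    |condP Q i x - condP R i x| ≤
      3 * sSup {v : ℝ | ∃ y : ι → Bool, cylMarg R i y ≠ 0 ∧
        v = |cylFull Q y - cylFull R y| / cylMarg R i y} :=
  condProb_difference_bound_general Q R i x hR
end

section
/- Let (G, A, P) be an Ising model with pairwise potential f with temperature parameter r^{-1}. Then there exist positive constants c_r* ≤ C_r* depending only on r (one may take c_r* = (1-e^{-4r})e^{-2r}/(4r(1+e^{2r})^3) and C_r* = (e^{4r}-1)e^{2r}/(4r(1+e^{-2r})^2)) such that for every subset V of G, c_r* ∑_{j∉V} ω_{i,j}(f) ≤ ‖P_{i|G} - P_{i|V}‖_∞ ≤ C_r* ∑_{j∉V} ω_{i,j}(f). -/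
open MeasureTheory

/-- `g_{i,j}(a,b) = f_{i,j}(a,b) - f_{i,j}(-a,b)`. -/
noncomputable def gpot {G : Type*} (f : G → G → Bool → Bool → ℝ) (i j : G) (a b : Bool) : ℝ :=
  f i j a b - f i j (!a) b

/-- One-point specification of the Ising model:
`spec f i a y = (1 + exp(-∑_j g_{i,j}(a, y(j))))⁻¹`. -/
noncomputable def spec {G : Type*} (f : G → G → Bool → Bool → ℝ) (i : G) (a : Bool)
    (y : G → Bool) : ℝ :=
  1 / (1 + Real.exp (-(∑' j, gpot f i j a (y j))))

/-- `P` is an Ising model with potential `f` (DLR equations). -/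
def IsIsing {G : Type*} [MeasurableSpace (G → Bool)] (f : G → G → Bool → Bool → ℝ)
    (P : Measure (G → Bool)) : Prop :=
  ∀ (i : G) (B : Set (G → Bool)), MeasurableSet B →
    (∀ y z : G → Bool, (∀ j, j ≠ i → y j = z j) → (y ∈ B ↔ z ∈ B)) →
    ∀ a : Bool, P (B ∩ {y | y i = a}) = ENNReal.ofReal (∫ y in B, spec f i a y ∂P)

/-- `ω_{i,j}(f) = sup_{a,b} (g_{i,j}(a,b) - g_{i,j}(a,-b))`. -/
noncomputable def omegaf {G : Type*} (f : G → G → Bool → Bool → ℝ) (i j : G) : ℝ :=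
  ⨆ a : Bool, ⨆ b : Bool, (gpot f i j a b - gpot f i j a (!b))

/-- Conditional probability `P_{i|V}(x) = P(x(i) | x(V \ {i}))`, with the convention
that it equals `1/2` when the conditioning cylinder has probability `0`. -/
noncomputable def condProb {G : Type*} [DecidableEq G] (P : Measure (G → Bool)) (i : G)
    (V : Finset G) (x : G → Bool) : ℝ :=
  if P {y | ∀ j ∈ V.erase i, y j = x j} = 0 then 1/2
  else (P {y | y i = x i ∧ ∀ j ∈ V.erase i, y j = x j}).toReal /
    (P {y | ∀ j ∈ V.erase i, y j = x j}).toReal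

/-!
The one-point specification is `σ(h_i)`, with `σ` the logistic sigmoid and `h_i(y) =
∑_j g_{i,j}(y(i), y(j))` the local field, and the DLR equations make `P_{i|V}(x)` the average of
`P_{i|G}` over the cylinder of configurations agreeing with `x` on `V \ {i}`; every such cylinder
has positive mass because `σ > 0`. On that cylinder the local field moves by at most
`∑_{j∉V} ω_{i,j}` (the `j = i` term vanishes as `f_{i,i} = 0`), and `σ` is `1/4`-Lipschitz: this is
the upper bound. For the lower bound, take two configurations that agree on `V ∪ {i}` and, at each
`j ∉ V`, take the two values realising `ω_{i,j}`: they share `P_{i|V}`, their fields differ by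
exactly `∑_{j∉V} ω_{i,j}`, and since `|h_i| ≤ 2r` the slope of `σ` between them is at least
`(1 + e^{2r})⁻²`. Both bounds are then compared with the stated constants.
-/

namespace Real

lemma sigmoid_mul_one_sub_le_quarter (x : ℝ) : sigmoid x * (1 - sigmoid x) ≤ 1 / 4 := by
  nlinarith [sq_nonneg (sigmoid x - 1 / 2)]

lemma lipschitzWith_sigmoid : LipschitzWith (1 / 4) sigmoid := by
  refine lipschitzWith_of_nnnorm_deriv_le differentiable_sigmoid fun x => ?_
  rw [← NNReal.coe_le_coe, coe_nnnorm, deriv_sigmoid, norm_eq_abs,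
    abs_of_nonneg (mul_nonneg (sigmoid_nonneg x) (sub_nonneg.2 (sigmoid_le_one x)))]
  simpa using sigmoid_mul_one_sub_le_quarter x

lemma abs_sigmoid_sub_le (u v : ℝ) : |sigmoid u - sigmoid v| ≤ |u - v| / 4 := by
  have := lipschitzWith_sigmoid.dist_le_mul u v
  simp only [dist_eq_norm, norm_eq_abs] at this
  push_cast at this
  linarith

lemma inv_one_add_exp_le_sigmoid {M x : ℝ} (hx : -M ≤ x) : (1 + exp M)⁻¹ ≤ sigmoid x := by
  simpa [sigmoid_def] using sigmoid_le hx

/-- On `[-M, M]` the derivative `σ (1 - σ) = σ(x) σ(-x)` is at least `(1 + e^M)⁻²`. -/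
lemma sub_div_one_add_exp_sq_le_sigmoid_sub {M u v : ℝ} (hu : |u| ≤ M) (hv : |v| ≤ M)
    (hvu : v ≤ u) : (u - v) / (1 + exp M) ^ 2 ≤ sigmoid u - sigmoid v := by
  rcases hvu.eq_or_lt with rfl | hlt
  · simp
  obtain ⟨c, hc, hslope⟩ := exists_hasDerivAt_eq_slope sigmoid _ hlt
    continuous_sigmoid.continuousOn fun x _ => hasDerivAt_sigmoid x
  have hcM : |c| ≤ M :=
    abs_le.2 ⟨by linarith [(abs_le.1 hv).1, hc.1], by linarith [(abs_le.1 hu).2, hc.2]⟩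
  have hderiv : ((1 + exp M) ^ 2)⁻¹ ≤ sigmoid c * (1 - sigmoid c) := by
    rw [← sigmoid_neg, ← inv_pow, sq]
    exact mul_le_mul (inv_one_add_exp_le_sigmoid (neg_le_of_abs_le hcM))
      (inv_one_add_exp_le_sigmoid (by linarith [le_abs_self c])) (by positivity)
      (sigmoid_nonneg c)
  rw [hslope, le_div_iff₀ (sub_pos.2 hlt)] at hderiv
  rwa [div_eq_inv_mul]

end Real

lemma ciSup_bool_eq {α : Type*} [ConditionallyCompleteLattice α] (F : Bool → α) :
    ⨆ b, F b = F true ⊔ F false :=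
  le_antisymm (ciSup_le (Bool.forall_bool.2 ⟨le_sup_right, le_sup_left⟩))
    (sup_le (le_ciSup (Set.finite_range F).bddAbove true)
      (le_ciSup (Set.finite_range F).bddAbove false))

lemma abs_tsum_le_tsum_abs {ι : Type*} {g : ι → ℝ} (hg : Summable fun j => |g j|) :
    |∑' j, g j| ≤ ∑' j, |g j| := by
  simpa only [Real.norm_eq_abs] using
    norm_tsum_le_tsum_norm (f := g) (by simpa only [Real.norm_eq_abs] using hg)

lemma abs_sub_setIntegral_div_le {α : Type*} [MeasurableSpace α] {μ : Measure α} {s : Set α}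
    {g : α → ℝ} {c K : ℝ} (hs : μ s ≠ 0) (hs' : μ s ≠ ⊤) (hg : IntegrableOn g s μ)
    (hK : ∀ y ∈ s, |c - g y| ≤ K) :
    |c - (∫ y in s, g y ∂μ) / (μ s).toReal| ≤ K := by
  have hpos : 0 < (μ s).toReal := ENNReal.toReal_pos hs hs'
  have hint : ∫ y in s, (c - g y) ∂μ = c * (μ s).toReal - ∫ y in s, g y ∂μ := by
    rw [integral_sub (integrableOn_const (C := c) hs') hg, setIntegral_const, smul_eq_mul,
      measureReal_def, mul_comm]
  have hbound : |∫ y in s, (c - g y) ∂μ| ≤ K * (μ s).toReal := by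
    simpa only [Real.norm_eq_abs, measureReal_def] using
      norm_setIntegral_le_of_norm_le_const hs'.lt_top
        fun y hy => (Real.norm_eq_abs _).trans_le (hK y hy)
  rw [hint] at hbound
  rwa [← mul_div_cancel_right₀ c hpos.ne', ← sub_div, abs_div, abs_of_pos hpos, div_le_iff₀ hpos]

section Potential

variable {G : Type*} (f : G → G → Bool → Bool → ℝ) (i j : G)

lemma gpot_false_left (b : Bool) : gpot f i j false b = -gpot f i j true b := by
  simp only [gpot, Bool.not_false, Bool.not_true]
  ring

lemma omegaf_eq_abs : omegaf f i j = |gpot f i j true true - gpot f i j true false| := by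
  simp only [omegaf, ciSup_bool_eq, gpot_false_left, Bool.not_true, Bool.not_false,
    abs_eq_max_neg, neg_sub, neg_sub_neg]
  rw [max_comm (gpot f i j true false - _), max_self]

lemma omegaf_nonneg : 0 ≤ omegaf f i j := by
  rw [omegaf_eq_abs]
  exact abs_nonneg _

lemma abs_gpot_sub_le_omegaf (a b b' : Bool) :
    |gpot f i j a b - gpot f i j a b'| ≤ omegaf f i j := by
  have key : ∀ b b' : Bool, |gpot f i j true b - gpot f i j true b'| ≤ omegaf f i j := by
    rw [omegaf_eq_abs]
    intro b b'
    cases b <;> cases b' <;> simp [abs_sub_comm]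
  cases a
  · simpa only [gpot_false_left, neg_sub_neg] using key b' b
  · exact key b b'

lemma exists_gpot_sub_eq_omegaf : ∃ b, gpot f i j true b - gpot f i j true (!b) = omegaf f i j := by
  rw [omegaf_eq_abs]
  rcases le_total 0 (gpot f i j true true - gpot f i j true false) with h | h
  · exact ⟨true, (abs_of_nonneg h).symm⟩
  · exact ⟨false, by rw [abs_of_nonpos h, neg_sub]; rfl⟩

lemma abs_gpot_le (a b : Bool) :
    |gpot f i j a b| ≤ max |f i j a true| |f i j a false|
      + max |f i j (!a) true| |f i j (!a) false| := by
  refine (abs_sub _ _).trans (add_le_add ?_ ?_) <;> cases b <;> simp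

variable {f i}

lemma gpot_self (hdiag : ∀ a b, f i i a b = 0) (a b : Bool) : gpot f i i a b = 0 := by
  simp [gpot, hdiag]

lemma omegaf_self (hdiag : ∀ a b, f i i a b = 0) : omegaf f i i = 0 := by
  simp [omegaf_eq_abs, gpot_self hdiag]

end Potential

noncomputable def localField {G : Type*} (f : G → G → Bool → Bool → ℝ) (i : G) (a : Bool)
    (y : G → Bool) : ℝ :=
  ∑' j, gpot f i j a (y j)

section LocalField

variable {G : Type*} {f : G → G → Bool → Bool → ℝ} {i : G}

lemma spec_eq_sigmoid_localField (a : Bool) (y : G → Bool) :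
    spec f i a y = Real.sigmoid (localField f i a y) :=
  one_div _

lemma spec_pos (a : Bool) (y : G → Bool) : 0 < spec f i a y := by
  rw [spec_eq_sigmoid_localField]
  exact Real.sigmoid_pos _

lemma spec_le_one (a : Bool) (y : G → Bool) : spec f i a y ≤ 1 := by
  rw [spec_eq_sigmoid_localField]
  exact Real.sigmoid_le_one _

variable (hsum : ∀ a, Summable fun j => max |f i j a true| |f i j a false|)
include hsum

lemma summable_abs_gpot (a : Bool) (y : G → Bool) : Summable fun j => |gpot f i j a (y j)| :=
  .of_nonneg_of_le (fun _ => abs_nonneg _) (fun j => abs_gpot_le f i j a (y j))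
    ((hsum a).add (hsum (!a)))

lemma summable_gpot (a : Bool) (y : G → Bool) : Summable fun j => gpot f i j a (y j) :=
  (summable_abs_gpot hsum a y).of_abs

lemma summable_omegaf : Summable (omegaf f i) := by
  refine .of_nonneg_of_le (omegaf_nonneg f i) (fun j => ?_)
    (((hsum true).add (hsum false)).add ((hsum true).add (hsum false)))
  rw [omegaf_eq_abs]
  exact (abs_sub _ _).trans (add_le_add (abs_gpot_le f i j true true)
    (abs_gpot_le f i j true false))

lemma abs_localField_le {r : ℝ} (hrange : ∀ a, ∑' j, max |f i j a true| |f i j a false| ≤ r)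
    (a : Bool) (y : G → Bool) : |localField f i a y| ≤ 2 * r := by
  calc |localField f i a y| ≤ ∑' j, |gpot f i j a (y j)| :=
        abs_tsum_le_tsum_abs (summable_abs_gpot hsum a y)
    _ ≤ ∑' j, (max |f i j a true| |f i j a false| + max |f i j (!a) true| |f i j (!a) false|) :=
        Summable.tsum_le_tsum (fun j => abs_gpot_le f i j a (y j)) (summable_abs_gpot hsum a y)
          ((hsum a).add (hsum (!a)))
    _ ≤ 2 * r := by
        rw [Summable.tsum_add (hsum a) (hsum (!a))]
        linarith [hrange a, hrange (!a)]

lemma abs_localField_sub_le [DecidableEq G] (hdiag : ∀ a b, f i i a b = 0) {V : Finset G} {a : Bool}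
    {y z : G → Bool} (hyz : ∀ j ∈ V.erase i, y j = z j) :
    |localField f i a y - localField f i a z| ≤ ∑' j : {j // j ∉ V}, omegaf f i j := by
  have hterm : ∀ j, |gpot f i j a (y j) - gpot f i j a (z j)| ≤
      {j | j ∉ V}.indicator (omegaf f i) j := by
    intro j
    by_cases hjV : j ∈ V
    · rw [Set.indicator_of_notMem (by simpa using hjV)]
      rcases eq_or_ne j i with rfl | hji
      · simp [gpot_self hdiag]
      · simp [hyz j (Finset.mem_erase.2 ⟨hji, hjV⟩)]
    · rw [Set.indicator_of_mem (by simpa using hjV)]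
      exact abs_gpot_sub_le_omegaf f i j a _ _
  have hsub := (summable_gpot hsum a y).sub (summable_gpot hsum a z)
  calc |localField f i a y - localField f i a z|
      = |∑' j, (gpot f i j a (y j) - gpot f i j a (z j))| := by
        rw [localField, localField, Summable.tsum_sub (summable_gpot hsum a y)
          (summable_gpot hsum a z)]
    _ ≤ ∑' j, |gpot f i j a (y j) - gpot f i j a (z j)| :=
        abs_tsum_le_tsum_abs hsub.abs
    _ ≤ ∑' j, {j | j ∉ V}.indicator (omegaf f i) j :=
        Summable.tsum_le_tsum hterm hsub.abs ((summable_omegaf hsum).indicator _)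
    _ = ∑' j : {j // j ∉ V}, omegaf f i j := (tsum_subtype {j | j ∉ V} (omegaf f i)).symm

lemma exists_localField_sub_eq_tsum_omegaf (hdiag : ∀ a b, f i i a b = 0) (V : Finset G) :
    ∃ y z : G → Bool, y i = true ∧ z i = true ∧ (∀ j ∈ V, y j = z j) ∧
      localField f i true y - localField f i true z = ∑' j : {j // j ∉ V}, omegaf f i j := by
  classical
  choose b hb using fun j => exists_gpot_sub_eq_omegaf f i j
  let y : G → Bool := fun j => if j ∈ V ∨ j = i then true else b j
  let z : G → Bool := fun j => if j ∈ V ∨ j = i then true else !b j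
  refine ⟨y, z, by simp [y], by simp [z], fun j hj => by simp [y, z, hj], ?_⟩
  have hterm : ∀ j, gpot f i j true (y j) - gpot f i j true (z j) =
      {j | j ∉ V}.indicator (omegaf f i) j := by
    intro j
    by_cases hjV : j ∈ V
    · simp [y, z, hjV]
    · rw [Set.indicator_of_mem (by simpa using hjV)]
      rcases eq_or_ne j i with rfl | hji
      · simp [y, z, omegaf_self hdiag]
      · simp [y, z, hjV, hji, hb j]
  rw [localField, localField, ← Summable.tsum_sub (summable_gpot hsum true y)
    (summable_gpot hsum true z), tsum_congr hterm]
  exact (tsum_subtype {j | j ∉ V} (omegaf f i)).symm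

end LocalField

section Measure

variable {G : Type*} {f : G → G → Bool → Bool → ℝ}

lemma measurable_localField [Countable G] {i : G} {a : Bool}
    (hs : ∀ y : G → Bool, Summable fun j => gpot f i j a (y j)) :
    Measurable (localField f i a) := by
  have hpartial : ∀ s : Finset G, Measurable fun y : G → Bool => ∑ j ∈ s, gpot f i j a (y j) :=
    fun s => Finset.measurable_sum _ fun j _ =>
      (measurable_of_countable fun b => gpot f i j a b).comp (measurable_pi_apply j)
  refine measurable_of_tendsto_metrizable' Filter.atTop hpartial ?_
  exact tendsto_pi_nhds.2 fun y => (hs y).hasSum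

lemma integrable_spec [Countable G] {i : G} {a : Bool}
    (hs : ∀ y : G → Bool, Summable fun j => gpot f i j a (y j))
    (μ : Measure (G → Bool)) [IsFiniteMeasure μ] : Integrable (spec f i a) μ := by
  have hmeas : Measurable (spec f i a) := by
    rw [funext (spec_eq_sigmoid_localField (f := f) (i := i) a)]
    exact continuous_sigmoid.measurable.comp (measurable_localField hs)
  refine .of_bound hmeas.aestronglyMeasurable 1 (ae_of_all _ fun y => ?_)
  rw [Real.norm_eq_abs, abs_of_pos (spec_pos a y)]
  exact spec_le_one a y

def cylinderSet (W : Finset G) (x : G → Bool) : Set (G → Bool) :=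
  {y | ∀ j ∈ W, y j = x j}

lemma measurableSet_cylinderSet (W : Finset G) (x : G → Bool) :
    MeasurableSet (cylinderSet W x) := by
  have : cylinderSet W x = (W : Set G).pi fun j => {x j} := by
    ext y
    simp [cylinderSet]
  rw [this]
  exact .pi W.countable_toSet fun j _ => measurableSet_singleton _

lemma mem_cylinderSet_iff_of_eq_off {W : Finset G} {k : G} (hk : k ∉ W) {x y z : G → Bool}
    (hyz : ∀ j, j ≠ k → y j = z j) : y ∈ cylinderSet W x ↔ z ∈ cylinderSet W x :=
  forall₂_congr fun j hj => by rw [hyz j (ne_of_mem_of_not_mem hj hk)]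

lemma cylinderSet_insert [DecidableEq G] (k : G) (W : Finset G) (x : G → Bool) :
    cylinderSet (insert k W) x = cylinderSet W x ∩ {y | y k = x k} := by
  ext y
  simp [cylinderSet, and_comm]

variable {P : Measure (G → Bool)}

lemma measure_cylinderSet_pos [IsProbabilityMeasure P] (hP : IsIsing f P)
    (hint : ∀ k b, Integrable (spec f k b) P) (W : Finset G) (x : G → Bool) :
    0 < P (cylinderSet W x) := by
  classical
  induction W using Finset.induction_on with
  | empty => simp [cylinderSet]
  | insert k W hk ih =>
    have hsupp : Function.support (spec f k (x k)) = Set.univ :=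
      Set.eq_univ_of_forall fun y => (spec_pos (x k) y).ne'
    rw [cylinderSet_insert, hP k _ (measurableSet_cylinderSet W x)
        (fun y z hyz => mem_cylinderSet_iff_of_eq_off hk hyz) (x k), ENNReal.ofReal_pos,
      setIntegral_pos_iff_support_of_nonneg_ae (ae_of_all _ fun y => (spec_pos (x k) y).le)
        (hint k (x k)).integrableOn, hsupp, Set.univ_inter]
    exact ih

lemma condProb_eq_setIntegral_div [DecidableEq G] (hP : IsIsing f P) {i : G} {V : Finset G}
    {x : G → Bool} (hB : P (cylinderSet (V.erase i) x) ≠ 0) :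
    condProb P i V x = (∫ y in cylinderSet (V.erase i) x, spec f i (x i) y ∂P) /
      (P (cylinderSet (V.erase i) x)).toReal := by
  have hnum : {y : G → Bool | y i = x i ∧ ∀ j ∈ V.erase i, y j = x j} =
      cylinderSet (V.erase i) x ∩ {y | y i = x i} := by
    ext y
    simp [cylinderSet, and_comm]
  have hDLR := hP i _ (measurableSet_cylinderSet (V.erase i) x)
    (fun y z hyz => mem_cylinderSet_iff_of_eq_off (Finset.notMem_erase i V) hyz) (x i)
  have hB' : ¬P {y | ∀ j ∈ V.erase i, y j = x j} = 0 := hB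
  rw [condProb, if_neg hB', hnum, hDLR, ENNReal.toReal_ofReal
    (setIntegral_nonneg (measurableSet_cylinderSet _ x) fun y _ => (spec_pos (x i) y).le)]
  rfl

lemma condProb_congr [DecidableEq G] {i : G} {V : Finset G} {y z : G → Bool}
    (hi : y i = z i) (hV : ∀ j ∈ V, y j = z j) : condProb P i V y = condProb P i V z := by
  have hset : ∀ w : G → Bool, (∀ j ∈ V.erase i, w j = y j) ↔ (∀ j ∈ V.erase i, w j = z j) :=
    fun w => forall₂_congr fun j hj => by rw [hV j (Finset.mem_of_mem_erase hj)]
  simp only [condProb, hi, hset]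

lemma condProb_nonneg [DecidableEq G] (i : G) (V : Finset G) (x : G → Bool) :
    0 ≤ condProb P i V x := by
  unfold condProb
  split_ifs <;> positivity

lemma condProb_le_one [DecidableEq G] [IsFiniteMeasure P] (i : G) (V : Finset G)
    (x : G → Bool) : condProb P i V x ≤ 1 := by
  unfold condProb
  split_ifs
  · norm_num
  · exact div_le_one_of_le₀ (ENNReal.toReal_mono (measure_ne_top P _)
      (measure_mono fun y hy => hy.2)) ENNReal.toReal_nonneg

end Measure

section Bias

variable {G : Type*} [DecidableEq G] {f : G → G → Bool → Bool → ℝ} {P : Measure (G → Bool)}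
  {i : G} {V : Finset G}

lemma abs_spec_sub_condProb_le_one [IsFiniteMeasure P] (x : G → Bool) :
    |spec f i (x i) x - condProb P i V x| ≤ 1 :=
  abs_sub_le_iff.2
    ⟨by linarith [spec_le_one (f := f) (i := i) (x i) x, condProb_nonneg (P := P) i V x],
      by linarith [spec_pos (f := f) (i := i) (x i) x, condProb_le_one (P := P) i V x]⟩

lemma abs_spec_sub_condProb_le [Countable G] [IsProbabilityMeasure P] (hP : IsIsing f P)
    (hsum : ∀ k a, Summable fun j => max |f k j a true| |f k j a false|)
    (hdiag : ∀ a b, f i i a b = 0) (x : G → Bool) :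
    |spec f i (x i) x - condProb P i V x| ≤ (∑' j : {j // j ∉ V}, omegaf f i j) / 4 := by
  have hint : ∀ k b, Integrable (spec f k b) P := fun k b =>
    integrable_spec (summable_gpot (hsum k) b) P
  have hB := measure_cylinderSet_pos hP hint (V.erase i) x
  rw [condProb_eq_setIntegral_div hP hB.ne']
  refine abs_sub_setIntegral_div_le hB.ne' (measure_ne_top _ _) (hint i (x i)).integrableOn
    fun y hy => ?_
  rw [spec_eq_sigmoid_localField, spec_eq_sigmoid_localField]
  refine (Real.abs_sigmoid_sub_le _ _).trans ?_
  gcongr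
  exact abs_localField_sub_le (hsum i) hdiag fun j hj => (hy j hj).symm

lemma exists_abs_spec_sub_condProb_add_ge {r : ℝ}
    (hsum : ∀ a, Summable fun j => max |f i j a true| |f i j a false|)
    (hrange : ∀ a, ∑' j, max |f i j a true| |f i j a false| ≤ r)
    (hdiag : ∀ a b, f i i a b = 0) :
    ∃ y z : G → Bool, (∑' j : {j // j ∉ V}, omegaf f i j) / (1 + Real.exp (2 * r)) ^ 2 ≤
      |spec f i (y i) y - condProb P i V y| + |spec f i (z i) z - condProb P i V z| := by
  obtain ⟨y, z, hy, hz, hyz, hdiff⟩ := exists_localField_sub_eq_tsum_omegaf hsum hdiag V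
  have hΔ : 0 ≤ ∑' j : {j // j ∉ V}, omegaf f i j := tsum_nonneg fun j => omegaf_nonneg f i j
  have hσ := Real.sub_div_one_add_exp_sq_le_sigmoid_sub (abs_localField_le hsum hrange true y)
    (abs_localField_le hsum hrange true z) (by linarith)
  rw [hdiff, ← spec_eq_sigmoid_localField, ← spec_eq_sigmoid_localField] at hσ
  refine ⟨y, z, hσ.trans ?_⟩
  rw [hy, hz, condProb_congr (hy.trans hz.symm) hyz]
  linarith [le_abs_self (spec f i true y - condProb P i V z),
    neg_abs_le (spec f i true z - condProb P i V z)]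

end Bias

lemma lower_const_le {r : ℝ} (hr : 0 < r) :
    (1 - Real.exp (-(4 * r))) * Real.exp (-(2 * r)) / (4 * r * (1 + Real.exp (2 * r)) ^ 3) ≤
      1 / (2 * (1 + Real.exp (2 * r)) ^ 2) := by
  have h4r : 1 - Real.exp (-(4 * r)) ≤ 4 * r := by linarith [Real.add_one_le_exp (-(4 * r))]
  have hexp : Real.exp (-(2 * r)) ≤ 1 := Real.exp_le_one_iff.2 (by linarith)
  have htwo : 2 ≤ 1 + Real.exp (2 * r) := by linarith [Real.one_le_exp (by linarith : 0 ≤ 2 * r)]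
  rw [div_le_div_iff₀ (by positivity) (by positivity)]
  calc (1 - Real.exp (-(4 * r))) * Real.exp (-(2 * r)) * (2 * (1 + Real.exp (2 * r)) ^ 2)
      ≤ 4 * r * 1 * (2 * (1 + Real.exp (2 * r)) ^ 2) := by gcongr
    _ ≤ 1 * (4 * r * (1 + Real.exp (2 * r)) ^ 3) := by
        nlinarith [mul_le_mul_of_nonneg_left htwo
          (by positivity : (0 : ℝ) ≤ 4 * r * (1 + Real.exp (2 * r)) ^ 2)]

lemma quarter_le_upper_const {r : ℝ} (hr : 0 < r) :
    1 / 4 ≤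
      (Real.exp (4 * r) - 1) * Real.exp (2 * r) / (4 * r * (1 + Real.exp (-(2 * r))) ^ 2) := by
  have h4r : 4 * r ≤ Real.exp (4 * r) - 1 := by linarith [Real.add_one_le_exp (4 * r)]
  have hexp : 1 ≤ Real.exp (2 * r) := Real.one_le_exp (by linarith)
  have hden : 1 + Real.exp (-(2 * r)) ≤ 2 := by
    linarith [Real.exp_le_one_iff.2 (by linarith : -(2 * r) ≤ 0)]
  rw [div_le_div_iff₀ (by positivity) (by positivity), one_mul]
  calc 4 * r * (1 + Real.exp (-(2 * r))) ^ 2 ≤ 4 * r * 2 ^ 2 := by gcongr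
    _ ≤ (Real.exp (4 * r) - 1) * 1 * 4 := by linarith
    _ ≤ (Real.exp (4 * r) - 1) * Real.exp (2 * r) * 4 := by gcongr; linarith

theorem ising_bias_two_sided_bound {G : Type*} [Countable G] [DecidableEq G]
    (f : G → G → Bool → Bool → ℝ) (r : ℝ) (hr : 0 < r)
    (hdiag : ∀ (i : G) (a b : Bool), f i i a b = 0)
    (hsum : ∀ (i : G) (a : Bool), Summable fun j => max |f i j a true| |f i j a false|)
    (hrange : ∀ (i : G) (a : Bool), (∑' j, max |f i j a true| |f i j a false|) ≤ r)
    (P : Measure (G → Bool)) [IsProbabilityMeasure P] (hP : IsIsing f P)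
    (i : G) (V : Finset G) :
    ((1 - Real.exp (-(4*r))) * Real.exp (-(2*r)) / (4*r*(1 + Real.exp (2*r))^3)) *
        (∑' j : {j : G // j ∉ V}, omegaf f i (j : G)) ≤
        (⨆ x : G → Bool, |spec f i (x i) x - condProb P i V x|) ∧
      (⨆ x : G → Bool, |spec f i (x i) x - condProb P i V x|) ≤
        ((Real.exp (4*r) - 1) * Real.exp (2*r) / (4*r*(1 + Real.exp (-(2*r)))^2)) *
          (∑' j : {j : G // j ∉ V}, omegaf f i (j : G)) := by
  have hΔ : 0 ≤ ∑' j : {j // j ∉ V}, omegaf f i j := tsum_nonneg fun j => omegaf_nonneg f i j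
  have hbdd : BddAbove (Set.range fun x : G → Bool => |spec f i (x i) x - condProb P i V x|) :=
    ⟨1, Set.forall_mem_range.2 abs_spec_sub_condProb_le_one⟩
  obtain ⟨y, z, hyz⟩ :=
    exists_abs_spec_sub_condProb_add_ge (P := P) (V := V) (hsum i) (hrange i) (hdiag i)
  constructor
  · calc _ ≤ 1 / (2 * (1 + Real.exp (2 * r)) ^ 2) * ∑' j : {j // j ∉ V}, omegaf f i j :=
          mul_le_mul_of_nonneg_right (lower_const_le hr) hΔ
      _ ≤ _ := by
          rw [one_div_mul_eq_div, mul_comm (2 : ℝ), ← div_div, div_le_iff₀ two_pos]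
          linarith [le_ciSup hbdd y, le_ciSup hbdd z]
  · refine ciSup_le fun x => (abs_spec_sub_condProb_le hP hsum (hdiag i) x).trans ?_
    nlinarith [quarter_le_upper_const hr]
end

section
/- In the setting of the model selection proof: suppose on an event Ω, for all V in a finite collection 𝒢_n, ‖P̂_{i|V} - P_{i|V}‖_∞ ≤ c₂ v_V for some positive numbers v_V, and suppose Ĝ ∈ 𝒢_n minimizes V ↦ -‖P̂_{i|V}‖_∞ + C v_V with C > c₂. Assume P satisfies H1 with constant κ_min, i.e. κ_min ‖P_{i|G} - P_{i|W}‖_∞ ≤ ‖P_{i|G}‖_∞ - ‖P_{i|W}‖_∞ for all finite W. Then on Ω, for every V ∈ 𝒢_n, ‖P̂_{i|Ĝ} - P_{i|G}‖_∞ ≤ max(1/κ_min, c₂/(C - c₂)) · (‖P_{i|G} - P_{i|V}‖_∞ + (C + c₂) v_V). -/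
/-! Write `E` for the bias `⨆ x, |P_G x - P_Ĝ x|`. Concentration moves every norm `‖P̂_{i|W}‖` within
`c₂ v_W` of `‖P_{i|W}‖`, so H1 for `Ĝ`, the minimality of `Ĝ` and the reverse triangle inequality
for `V` chain to `κ E + (C - c₂) v_Ĝ ≤ ‖P_G - P_V‖ + (C + c₂) v_V`. The left side is the triangle
bound `E + c₂ v_Ĝ` for `‖P̂_{i|Ĝ} - P_G‖`, up to the factor `max (1/κ) (c₂/(C - c₂))`. -/

open Set

section SupBounds

variable {X : Type*} {f g : X → ℝ}

lemma bddAbove_range_of_mem_Icc {a b : ℝ} (hf : ∀ x, f x ∈ Icc a b) : BddAbove (range f) :=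
  ⟨b, by rintro _ ⟨x, rfl⟩; exact (hf x).2⟩

lemma bddAbove_range_abs_sub_of_mem_Icc {a b : ℝ} (hf : ∀ x, f x ∈ Icc a b)
    (hg : ∀ x, g x ∈ Icc a b) : BddAbove (range fun x => |f x - g x|) :=
  bddAbove_range_of_mem_Icc (a := 0) (b := b - a) fun x =>
    ⟨abs_nonneg _, abs_sub_le_of_le_of_le (hf x).1 (hf x).2 (hg x).1 (hg x).2⟩

lemma ciSup_le_ciSup_add [Nonempty X] {c : ℝ} (hg : BddAbove (range g))
    (h : ∀ x, f x - g x ≤ c) : ⨆ x, f x ≤ (⨆ x, g x) + c :=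
  ciSup_le fun x => by linarith [h x, le_ciSup hg x]

end SupBounds

lemma add_mul_le_max_mul_of_le {a b c x y z : ℝ} (ha : 0 < a) (hb : 0 < b) (hx : 0 ≤ x)
    (hy : 0 ≤ y) (h : a * x + b * y ≤ z) : x + c * y ≤ max (1 / a) (c / b) * z := by
  set M := max (1 / a) (c / b)
  have hMa : 1 ≤ M * a := (div_le_iff₀ ha).1 (le_max_left _ _)
  have hMb : c ≤ M * b := (div_le_iff₀ hb).1 (le_max_right _ _)
  have hM : 0 ≤ M := (one_div_pos.2 ha).le.trans (le_max_left _ _)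
  calc x + c * y ≤ M * a * x + M * b * y :=
        add_le_add (le_mul_of_one_le_left hx hMa) (mul_le_mul_of_nonneg_right hMb hy)
    _ = M * (a * x + b * y) := by ring
    _ ≤ M * z := mul_le_mul_of_nonneg_left h hM

theorem model_selection_oracle_general {ι X : Type*} [Nonempty X] (𝒢 : Finset ι)
    (Phat Pt : ι → X → ℝ) (PG : X → ℝ)
    (hPhat : ∀ V x, Phat V x ∈ Set.Icc (0:ℝ) 1)
    (hPt : ∀ V x, Pt V x ∈ Set.Icc (0:ℝ) 1)
    (hPG : ∀ x, PG x ∈ Set.Icc (0:ℝ) 1)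
    (c₂ C κ : ℝ) (hC : c₂ < C) (hκ : 0 < κ)
    (v : ι → ℝ) (hv : ∀ V ∈ 𝒢, 0 < v V)
    -- on the event Ω: sup-norm concentration for every model in the collection
    (hconc : ∀ V ∈ 𝒢, (⨆ x, |Phat V x - Pt V x|) ≤ c₂ * v V)
    -- Ĝ minimizes the penalized criterion over the collection
    (G0 : ι) (hG0 : G0 ∈ 𝒢)
    (hmin : ∀ V ∈ 𝒢, -(⨆ x, Phat G0 x) + C * v G0 ≤ -(⨆ x, Phat V x) + C * v V)
    -- assumption H1
    (hH1 : ∀ V ∈ 𝒢, κ * (⨆ x, |PG x - Pt V x|) ≤ (⨆ x, PG x) - (⨆ x, Pt V x)) :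
    ∀ V ∈ 𝒢, (⨆ x, |Phat G0 x - PG x|) ≤
      max (1/κ) (c₂ / (C - c₂)) * ((⨆ x, |PG x - Pt V x|) + (C + c₂) * v V) := by
  intro V hV
  have hdev : ∀ W ∈ 𝒢, ∀ x, |Phat W x - Pt W x| ≤ c₂ * v W := fun W hW x =>
    (le_ciSup (bddAbove_range_abs_sub_of_mem_Icc (hPhat W) (hPt W)) x).trans (hconc W hW)
  have hbias : ∀ W x, |PG x - Pt W x| ≤ ⨆ x, |PG x - Pt W x| := fun W =>
    le_ciSup (bddAbove_range_abs_sub_of_mem_Icc hPG (hPt W))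
  have hnorm_G0 : ⨆ x, Phat G0 x ≤ (⨆ x, Pt G0 x) + c₂ * v G0 :=
    ciSup_le_ciSup_add (bddAbove_range_of_mem_Icc (hPt G0)) fun x =>
      (abs_sub_le_iff.1 (hdev G0 hG0 x)).1
  have hnorm_V : ⨆ x, Pt V x ≤ (⨆ x, Phat V x) + c₂ * v V :=
    ciSup_le_ciSup_add (bddAbove_range_of_mem_Icc (hPhat V)) fun x =>
      (abs_sub_le_iff.1 (hdev V hV x)).2
  have hnorm_PG : ⨆ x, PG x ≤ (⨆ x, Pt V x) + ⨆ x, |PG x - Pt V x| :=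
    ciSup_le_ciSup_add (bddAbove_range_of_mem_Icc (hPt V)) fun x =>
      (abs_sub_le_iff.1 (hbias V x)).1
  have hpenalized : κ * (⨆ x, |PG x - Pt G0 x|) + (C - c₂) * v G0 ≤
      (⨆ x, |PG x - Pt V x|) + (C + c₂) * v V := by
    linarith [hH1 G0 hG0, hmin V hV]
  have htriangle : (⨆ x, |Phat G0 x - PG x|) ≤ (⨆ x, |PG x - Pt G0 x|) + c₂ * v G0 :=
    ciSup_le fun x => by
      linarith [abs_sub_le (Phat G0 x) (Pt G0 x) (PG x), hdev G0 hG0 x,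
        abs_sub_comm (Pt G0 x) (PG x), hbias G0 x]
  exact htriangle.trans <| add_mul_le_max_mul_of_le hκ (sub_pos.2 hC)
    (Real.iSup_nonneg fun x => abs_nonneg _) (hv G0 hG0).le hpenalized

/-- Oracle inequality for the model selection rule: abstract model index `ι`,
configuration space `X`; `Phat V` is the empirical conditional probability
`P̂_{i|V}`, `Pt V` the true conditional `P_{i|V}`, `PG` the full specification
`P_{i|G}`, all taking values in `[0,1]`; sup-norms are suprema over `X`. -/
theorem model_selection_oracle {ι X : Type*} [Nonempty X] (𝒢 : Finset ι)
    (Phat Pt : ι → X → ℝ) (PG : X → ℝ)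
    (hPhat : ∀ V x, Phat V x ∈ Set.Icc (0:ℝ) 1)
    (hPt : ∀ V x, Pt V x ∈ Set.Icc (0:ℝ) 1)
    (hPG : ∀ x, PG x ∈ Set.Icc (0:ℝ) 1)
    (c₂ C κ : ℝ) (hc₂ : 0 < c₂) (hC : c₂ < C) (hκ : 0 < κ)
    (v : ι → ℝ) (hv : ∀ V ∈ 𝒢, 0 < v V)
    -- on the event Ω: sup-norm concentration for every model in the collection
    (hconc : ∀ V ∈ 𝒢, (⨆ x, |Phat V x - Pt V x|) ≤ c₂ * v V)
    -- Ĝ minimizes the penalized criterion over the collection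
    (G0 : ι) (hG0 : G0 ∈ 𝒢)
    (hmin : ∀ V ∈ 𝒢, -(⨆ x, Phat G0 x) + C * v G0 ≤ -(⨆ x, Phat V x) + C * v V)
    -- assumption H1
    (hH1 : ∀ V ∈ 𝒢, κ * (⨆ x, |PG x - Pt V x|) ≤ (⨆ x, PG x) - (⨆ x, Pt V x)) :
    ∀ V ∈ 𝒢, (⨆ x, |Phat G0 x - PG x|) ≤
      max (1/κ) (c₂ / (C - c₂)) * ((⨆ x, |PG x - Pt V x|) + (C + c₂) * v V) :=
  model_selection_oracle_general 𝒢 Phat Pt PG hPhat hPt hPG c₂ C κ hC hκ v hv hconc G0 hG0 hmin hH1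
end
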